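/- Let σ > 0, ε > 0 and d ≠ 0 be real numbers, and let g : ℝ → ℝ be continuous on the closed interval [−ε, ε], twice differentiable on the open interval (−ε, ε), and satisfy d · g'(x) + (σ²/2) · g''(x) = −1 for all x ∈ (−ε, ε) together with the boundary conditions g(−ε) = g(ε) = 0. Then g(0) = (ε/d) · tanh(ε·d/σ²). -/

import Mathlib

/-!
With `k = 2d/σ²` the equation is the first-order equation `w' = -k w` for `w = g' + 1/d`, so
`w = B e^{-kx}` and `g = C - x/d - c e^{-kx}` on `[-ε, ε]`. The two boundary conditions give
`c sinh(kε) = ε/d` and `C = c cosh(kε)`, whence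
`g 0 = C - c = (ε/d) (cosh(kε) - 1) / sinh(kε) = (ε/d) tanh(kε/2)`.
-/

open Set Real

theorem eq_of_continuousOn_of_hasDerivAt_zero {f : ℝ → ℝ} {a b : ℝ} (hab : a ≤ b)
    (hf : ContinuousOn f (Icc a b)) (hf' : ∀ x ∈ Ioo a b, HasDerivAt f 0 x) : f a = f b := by
  rcases hab.eq_or_lt with rfl | hlt
  · rfl
  obtain ⟨c, -, hc⟩ := exists_hasDerivAt_eq_slope f (fun _ ↦ 0) hlt hf hf'
  rw [eq_comm, div_eq_zero_iff, sub_eq_zero, sub_eq_zero] at hc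
  exact (hc.resolve_right hlt.ne').symm

theorem IsOpen.exists_eq_mul_exp_of_hasDerivAt {s : Set ℝ} (hs : IsOpen s)
    (hs' : IsPreconnected s) {w : ℝ → ℝ} {r : ℝ} (hw : ∀ x ∈ s, HasDerivAt w (r * w x) x) :
    ∃ B, ∀ x ∈ s, w x = B * exp (r * x) := by
  have hF : ∀ x ∈ s, HasDerivAt (fun x ↦ w x * exp (-(r * x))) 0 x := by
    intro x hx
    refine ((hw x hx).mul ((hasDerivAt_id' x).const_mul r).neg.exp).congr_deriv ?_
    ring
  obtain ⟨B, hB⟩ := hs.exists_is_const_of_deriv_eq_zero hs'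
    (fun x hx ↦ (hF x hx).differentiableAt.differentiableWithinAt)
    (fun x hx ↦ (hF x hx).deriv)
  refine ⟨B, fun x hx ↦ ?_⟩
  rw [← hB x hx, mul_assoc, ← exp_add, neg_add_cancel, exp_zero, mul_one]

theorem exists_eq_sub_div_sub_mul_exp_of_ode {p q a b : ℝ} (hp : p ≠ 0)
    (hq : q ≠ 0) {g g' g'' : ℝ → ℝ} (hcont : ContinuousOn g (Icc a b))
    (hg : ∀ x ∈ Ioo a b, HasDerivAt g (g' x) x) (hg' : ∀ x ∈ Ioo a b, HasDerivAt g' (g'' x) x)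
    (hode : ∀ x ∈ Ioo a b, p * g' x + q * g'' x = -1) :
    ∃ C c, ∀ x ∈ Icc a b, g x = C - x / p - c * exp (-(p / q) * x) := by
  obtain ⟨B, hB⟩ := isOpen_Ioo.exists_eq_mul_exp_of_hasDerivAt isPreconnected_Ioo
    (w := fun x ↦ g' x + 1 / p) (r := -(p / q)) fun x hx ↦ by
      refine ((hg' x hx).add_const (1 / p)).congr_deriv ?_
      have := hode x hx
      field_simp
      linarith
  set Ψ := fun x ↦ g x + x / p + B / (p / q) * exp (-(p / q) * x)
  have hΨ : ∀ x ∈ Ioo a b, HasDerivAt Ψ 0 x := by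
    intro x hx
    refine (((hg x hx).add ((hasDerivAt_id' x).div_const p)).add
      (((hasDerivAt_id' x).const_mul (-(p / q))).exp.const_mul (B / (p / q)))).congr_deriv ?_
    rw [hB x hx]
    field_simp
    ring
  have hΨcont : ContinuousOn Ψ (Icc a b) := by fun_prop
  refine ⟨Ψ a, B / (p / q), fun x hx ↦ ?_⟩
  have := eq_of_continuousOn_of_hasDerivAt_zero hx.1 (hΨcont.mono (Icc_subset_Icc_right hx.2))
    fun y hy ↦ hΨ y ⟨hy.1, hy.2.trans_le hx.2⟩
  simp only [Ψ] at this ⊢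
  linarith

theorem Real.sinh_mul_tanh_half (t : ℝ) : sinh t * tanh (t / 2) = cosh t - 1 := by
  obtain ⟨s, rfl⟩ : ∃ s, t = 2 * s := ⟨t / 2, by ring⟩
  rw [mul_div_cancel_left₀ s two_ne_zero, sinh_two_mul, cosh_two_mul, tanh_eq_sinh_div_cosh,
    cosh_sq]
  field_simp
  ring

/-- The boundary-value problem `d·g' + (σ²/2)·g'' = −1` on `(−ε, ε)` with `g(±ε) = 0`
(mean first exit time of a Brownian motion with drift `d ≠ 0` and diffusion rate `σ`)
satisfies `g(0) = (ε/d)·tanh(ε·d/σ²)`. -/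
theorem mfet_drift_ode (σ ε d : ℝ) (hσ : 0 < σ) (hε : 0 < ε) (hd : d ≠ 0)
    (g g' g'' : ℝ → ℝ)
    (hcont : ContinuousOn g (Set.Icc (-ε) ε))
    (hderiv1 : ∀ x ∈ Set.Ioo (-ε) ε, HasDerivAt g (g' x) x)
    (hderiv2 : ∀ x ∈ Set.Ioo (-ε) ε, HasDerivAt g' (g'' x) x)
    (hode : ∀ x ∈ Set.Ioo (-ε) ε, d * g' x + σ ^ 2 / 2 * g'' x = -1)
    (hbc_lo : g (-ε) = 0) (hbc_hi : g ε = 0) :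
    g 0 = ε / d * Real.tanh (ε * d / σ ^ 2) := by
  obtain ⟨C, c, hsol⟩ := exists_eq_sub_div_sub_mul_exp_of_ode hd
    (by positivity) hcont hderiv1 hderiv2 hode
  set t := d / (σ ^ 2 / 2) * ε
  have hlo := hbc_lo ▸ hsol (-ε) (left_mem_Icc.2 (by linarith))
  have hhi := hbc_hi ▸ hsol ε (right_mem_Icc.2 (by linarith))
  rw [hsol 0 ⟨by linarith, hε.le⟩, show ε * d / σ ^ 2 = t / 2 by simp only [t]; field_simp]
  rw [show -(d / (σ ^ 2 / 2)) * -ε = t by ring, ← cosh_add_sinh, neg_div] at hlo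
  rw [show -(d / (σ ^ 2 / 2)) * ε = -t by ring, ← cosh_sub_sinh] at hhi
  have hε_div : ε / d = c * sinh t := by linarith
  have hC : C = c * cosh t := by linarith
  rw [hε_div, hC, mul_assoc, sinh_mul_tanh_half, mul_zero, exp_zero]
  ring
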